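/- arXiv:1602.06042 — 2 statements merged into one kernel-verified Lean document; each statement's English description precedes it below -/
import Mathlib

section
/- Let 𝒮_k be a family of subsets of {1, …, p}, let w* ∈ ℝ^p with S* = supp(w*), let 0 < α ≤ L, and let f : ℝ^p → ℝ be twice continuously differentiable such that for every w ∈ ℝ^p supported on S ∪ S* with S ∈ 𝒮_k and every v ∈ ℝ^p supported on S ∪ S' ∪ S* with S, S' ∈ 𝒮_k, α‖v‖² ≤ vᵀ∇²f(w)v ≤ L‖v‖². Let θ ≥ 0 and ε ≥ 0 be such that ρ := (1 + √θ)(1 − α/L) < 1. Suppose the iterates satisfy: w_0 is supported on some S_0 ∈ 𝒮_k, and for each t ≥ 0, g_t = w_t − (1/L)∇f(w_t), S_{t+1} ∈ 𝒮_k, w_{t+1} = (g_t)_{S_{t+1}}, and ‖(g_t)_{S*\S_{t+1}}‖² ≤ θ ‖(g_t)_{S_{t+1}\S*}‖² + ε. Then for every T ≥ 0, ‖w_T − w*‖ ≤ ρ^T ‖w_0 − w*‖ + (1/(1 − ρ)) · [ ((1 + √θ)/L) · γ + √ε ], where γ = sup_{S ∈ 𝒮_k} ‖(∇f(w*))_{S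 ∪ S*}‖. -/
open Finset

noncomputable section

/-- The restriction of a vector to a coordinate set: agrees with `z` on `S`, zero off `S`. -/
def restrict {p : ℕ} (z : EuclideanSpace ℝ (Fin p)) (S : Finset (Fin p)) :
    EuclideanSpace ℝ (Fin p) :=
  WithLp.toLp 2 (fun i => if i ∈ S then z i else 0)

open Classical in
/-- The support of a vector, as a finite set. -/
noncomputable def suppF {p : ℕ} (z : EuclideanSpace ℝ (Fin p)) : Finset (Fin p) :=
  Finset.univ.filter (fun i => z i ≠ 0)

/-- `w` is `k`-group-sparse w.r.t. the groups `G`. -/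
def GroupSparse {p M : ℕ} (G : Fin M → Finset (Fin p)) (k : ℕ)
    (w : EuclideanSpace ℝ (Fin p)) : Prop :=
  ∃ A : Finset (Fin M), A.card ≤ k ∧ suppF w ⊆ A.biUnion G

/-- `B_j`: the union of the first `j` selected groups. -/
def partialUnion {p M m : ℕ} (G : Fin M → Finset (Fin p)) (idx : Fin m → Fin M) (j : ℕ) :
    Finset (Fin p) :=
  (Finset.univ.filter (fun t : Fin m => (t : ℕ) < j)).biUnion (fun t => G (idx t))

/-- `idx` is a greedy selection for `z` (Algorithm 2 of the paper): at each step `j`,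
the selected group maximizes the norm of `z` restricted to the yet-uncovered part. -/
def IsGreedySelection {p M m : ℕ} (G : Fin M → Finset (Fin p))
    (z : EuclideanSpace ℝ (Fin p)) (idx : Fin m → Fin M) : Prop :=
  ∀ j : Fin m, ∀ ℓ : Fin M,
    ‖restrict z (G ℓ \ partialUnion G idx (j : ℕ))‖ ≤
      ‖restrict z (G (idx j) \ partialUnion G idx (j : ℕ))‖

/-- `w` is an exact projection of `z` onto `k`-group-sparse vectors. -/
def IsExactProj {p M : ℕ} (G : Fin M → Finset (Fin p)) (k : ℕ)
    (z w : EuclideanSpace ℝ (Fin p)) : Prop :=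
  GroupSparse G k w ∧ ∀ w', GroupSparse G k w' → ‖w - z‖ ≤ ‖w' - z‖

/-- `f` satisfies restricted strong convexity / smoothness of order `k'`
with constants `α ≤ L`. -/
def RSCRSS {p M : ℕ} (G : Fin M → Finset (Fin p)) (k' : ℕ) (α L : ℝ)
    (f : EuclideanSpace ℝ (Fin p) → ℝ) : Prop :=
  ContDiff ℝ 2 f ∧
  ∀ w : EuclideanSpace ℝ (Fin p), GroupSparse G k' w →
    ∀ v : EuclideanSpace ℝ (Fin p),
      α * ‖v‖ ^ 2 ≤ iteratedFDeriv ℝ 2 f w ![v, v] ∧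
      iteratedFDeriv ℝ 2 f w ![v, v] ≤ L * ‖v‖ ^ 2

/-!
On vectors supported on `S ∪ S' ∪ S*` the gradient step is a contraction: by the fundamental
theorem of calculus `x - (∇f(a) - ∇f(b))/L` averages `(I - ∇²f/L) x` over the segment `[b, a]`,
and the Hessian bounds place the quadratic form of `I - ∇²f/L` between `0` and `(1 - α/L)‖·‖²`.
For `g = w_t - ∇f(w_t)/L`, since `w*` vanishes off `S*`,
`g_{S_{t+1}} - w* = (g - w*)_{S_{t+1} ∪ S*} - g_{S* \ S_{t+1}}`, and the approximate projection
property bounds the last term by `√θ ‖(g - w*)_{S_{t+1} ∪ S*}‖ + √ε`. As `g - w*` is the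
contracted step minus `∇f(w*)/L`, this gives `‖w_{t+1} - w*‖ ≤ ρ ‖w_t - w*‖ + (1 + √θ)γ/L + √ε`,
which unrolls to the claim.
-/

open scoped RealInnerProductSpace

section Bilinear

variable {E : Type*} [NormedAddCommGroup E] [InnerProductSpace ℝ E]

theorem LinearMap.BilinForm.apply_le_of_apply_self_le (q : LinearMap.BilinForm ℝ E)
    (hq : ∀ u x, q u x = q x u) (V : Submodule ℝ E) {c : ℝ}
    (hq₀ : ∀ v ∈ V, 0 ≤ q v v) (hqc : ∀ v ∈ V, q v v ≤ c * ‖v‖ ^ 2)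
    {u x : E} (hu : u ∈ V) (hx : x ∈ V) : q u x ≤ c * (‖u‖ * ‖x‖) := by
  rcases eq_or_ne u 0 with rfl | hu₀
  · simp
  rcases eq_or_ne x 0 with rfl | hx₀
  · simp
  have hun := norm_pos_iff.2 hu₀
  have hxn := norm_pos_iff.2 hx₀
  have hc : 0 ≤ c := nonneg_of_mul_nonneg_left ((hq₀ u hu).trans (hqc u hu)) (by positivity)
  -- polarization: `4 q a b = q (a + b) (a + b) - q (a - b) (a - b)`
  have polar : ∀ a ∈ V, ∀ b ∈ V, 2 * q a b ≤ c * (‖a‖ ^ 2 + ‖b‖ ^ 2) := by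
    intro a ha b hb
    have hadd := hqc (a + b) (V.add_mem ha hb)
    have hsub := hq₀ (a - b) (V.sub_mem ha hb)
    have hpar := parallelogram_law_with_norm ℝ a b
    simp only [map_add, map_sub, LinearMap.add_apply, LinearMap.sub_apply, hq b a] at hadd hsub
    nlinarith
  -- `t = ‖x‖ / ‖u‖` balances the two norms in `polar`
  set t := ‖x‖ / ‖u‖
  have ht : 0 < t := by positivity
  have htu : t * ‖u‖ = ‖x‖ := div_mul_cancel₀ _ hun.ne'
  have h := polar (t • u) (V.smul_mem t hu) x hx
  simp only [map_smul, LinearMap.smul_apply, smul_eq_mul, norm_smul,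
    Real.norm_of_nonneg ht.le, mul_pow, ← htu] at h
  refine le_of_mul_le_mul_left ?_ ht
  rw [← htu]
  nlinarith

theorem inner_sub_le_of_bilin_bounds (B : E →L[ℝ] E →L[ℝ] ℝ) (hB : ∀ u x, B u x = B x u)
    {α L : ℝ} (hL : 0 < L) (V : Submodule ℝ E)
    (hBV : ∀ v ∈ V, α * ‖v‖ ^ 2 ≤ B v v ∧ B v v ≤ L * ‖v‖ ^ 2)
    {u x : E} (hu : u ∈ V) (hx : x ∈ V) :
    ⟪u, x⟫ - (1 / L) * B u x ≤ (1 - α / L) * (‖u‖ * ‖x‖) := by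
  have key := LinearMap.BilinForm.apply_le_of_apply_self_le (innerₗ E - (1 / L) • B.toLinearMap₁₂)
    (fun u x => by simp [real_inner_comm, hB u x]) V (c := 1 - α / L) ?_ ?_ hu hx
  · simpa using key
  all_goals
    intro v hv
    have := hBV v hv
    simp only [LinearMap.sub_apply, LinearMap.smul_apply, innerₗ_apply_apply,
      ContinuousLinearMap.toLinearMap₁₂_apply_apply_apply, real_inner_self_eq_norm_sq, smul_eq_mul]
    field_simp
    linarith

end Bilinear

section Gradient

variable {E : Type*} [NormedAddCommGroup E] [InnerProductSpace ℝ E] [CompleteSpace E]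

theorem inner_sub_gradient_sub_le {f : E → ℝ} (hf : ContDiff ℝ 2 f) {α L : ℝ} (hL : 0 < L)
    (V : Submodule ℝ E) {a b u : E} (hab : a - b ∈ V) (hu : u ∈ V)
    (hH : ∀ s ∈ Set.Icc (0 : ℝ) 1, ∀ v ∈ V,
      α * ‖v‖ ^ 2 ≤ iteratedFDeriv ℝ 2 f (b + s • (a - b)) ![v, v] ∧
      iteratedFDeriv ℝ 2 f (b + s • (a - b)) ![v, v] ≤ L * ‖v‖ ^ 2) :
    ⟪u, a - b - (1 / L) • (gradient f a - gradient f b)⟫ ≤ (1 - α / L) * (‖u‖ * ‖a - b‖) := by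
  set x := a - b
  set c : ℝ → E := fun s => b + s • x
  have hf' : ContDiff ℝ 1 (fderiv ℝ f) := hf.fderiv_right (by norm_num)
  have hc : ∀ s, HasDerivAt c x s := fun s => by
    simpa [c] using ((hasDerivAt_id s).smul_const x).const_add b
  set g' : ℝ → ℝ := fun s => fderiv ℝ (fderiv ℝ f) (c s) x u
  have hg : ∀ s, HasDerivAt (fun s => fderiv ℝ f (c s) u) (g' s) s := fun s =>
    (ContinuousLinearMap.apply ℝ ℝ u).hasFDerivAt.comp_hasDerivAt s
      ((hf'.differentiable one_ne_zero (c s)).hasFDerivAt.comp_hasDerivAt s (hc s))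
  have hg'int : IntervalIntegrable g' MeasureTheory.volume 0 1 :=
    (((hf'.continuous_fderiv one_ne_zero).comp (by fun_prop)).clm_apply continuous_const
      |>.clm_apply continuous_const).intervalIntegrable 0 1
  have hFTC : ∫ s in (0 : ℝ)..1, g' s = fderiv ℝ f a u - fderiv ℝ f b u := by
    rw [intervalIntegral.integral_eq_sub_of_hasDerivAt (fun s _ => hg s) hg'int]
    simp [c, x]
  have hpt : ∀ s ∈ Set.Icc (0 : ℝ) 1, ⟪u, x⟫ - (1 / L) * g' s ≤ (1 - α / L) * (‖u‖ * ‖x‖) := by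
    intro s hs
    have hsymm := (hf.contDiffAt (x := c s)).isSymmSndFDerivAt (by simp)
    have := inner_sub_le_of_bilin_bounds _ hsymm (α := α) hL V (fun v hv => ?_) hu hab
    · simpa [g', hsymm x u] using this
    simpa [iteratedFDeriv_two_apply] using hH s hs v hv
  calc ⟪u, x - (1 / L) • (gradient f a - gradient f b)⟫
      = ∫ s in (0 : ℝ)..1, (⟪u, x⟫ - (1 / L) * g' s) := by
        rw [intervalIntegral.integral_sub intervalIntegrable_const (hg'int.const_mul _),
          intervalIntegral.integral_const_mul, hFTC]
        simp [inner_sub_right, real_inner_smul_right, inner_gradient_right]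
    _ ≤ ∫ _ in (0 : ℝ)..1, (1 - α / L) * (‖u‖ * ‖x‖) :=
        intervalIntegral.integral_mono_on zero_le_one
          (intervalIntegrable_const.sub (hg'int.const_mul _)) intervalIntegrable_const hpt
    _ = (1 - α / L) * (‖u‖ * ‖x‖) := by simp

end Gradient

theorem le_sqrt_mul_add_sqrt {m n θ ε : ℝ} (hn : 0 ≤ n) (h : m ^ 2 ≤ θ * n ^ 2 + ε) :
    m ≤ √θ * n + √ε := by
  have le_sq_sqrt : ∀ r : ℝ, r ≤ √r ^ 2 := fun r => by
    rcases le_total r 0 with hr | hr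
    · simpa [Real.sqrt_eq_zero'.2 hr]
    · rw [Real.sq_sqrt hr]
  refine le_of_sq_le_sq ?_ (by positivity)
  nlinarith [mul_le_mul_of_nonneg_right (le_sq_sqrt θ) (sq_nonneg n), le_sq_sqrt ε,
    mul_nonneg (mul_nonneg (Real.sqrt_nonneg θ) hn) (Real.sqrt_nonneg ε)]

theorem le_pow_mul_add_of_le_mul_add {a : ℕ → ℝ} {ρ K : ℝ} (hρ₀ : 0 ≤ ρ) (hρ₁ : ρ < 1)
    (hK : 0 ≤ K) (h : ∀ t, a (t + 1) ≤ ρ * a t + K) (T : ℕ) :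
    a T ≤ ρ ^ T * a 0 + 1 / (1 - ρ) * K := by
  have h1ρ : 0 < 1 - ρ := sub_pos.2 hρ₁
  induction T with
  | zero =>
    have : 0 ≤ 1 / (1 - ρ) * K := by positivity
    simpa using this
  | succ T ih =>
    calc a (T + 1) ≤ ρ * a T + K := h T
      _ ≤ ρ * (ρ ^ T * a 0 + 1 / (1 - ρ) * K) + K := by gcongr
      _ = ρ ^ (T + 1) * a 0 + 1 / (1 - ρ) * K := by field_simp; ring

section Support

variable {p : ℕ}

def supported (D : Finset (Fin p)) : Submodule ℝ (EuclideanSpace ℝ (Fin p)) where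
  carrier := {v | ∀ i ∉ D, v i = 0}
  add_mem' hv hw i hi := by simp [hv i hi, hw i hi]
  zero_mem' _ _ := rfl
  smul_mem' c v hv i hi := by simp [hv i hi]

theorem restrict_apply (z : EuclideanSpace ℝ (Fin p)) (D : Finset (Fin p)) (i : Fin p) :
    restrict z D i = if i ∈ D then z i else 0 :=
  rfl

theorem mem_supported_iff {D : Finset (Fin p)} {v : EuclideanSpace ℝ (Fin p)} :
    v ∈ supported D ↔ suppF v ⊆ D := by
  classical
  simp only [supported, Submodule.mem_mk, suppF, Finset.subset_iff, Finset.mem_filter,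
    Finset.mem_univ, true_and]
  exact ⟨fun h i hi => by_contra fun hiD => hi (h i hiD),
    fun h i hiD => by_contra fun hi => hiD (h hi)⟩

theorem supported_mono {D D' : Finset (Fin p)} (h : D ⊆ D') : supported D ≤ supported D' :=
  fun _ hv i hi => hv i fun hiD => hi (h hiD)

theorem restrict_mem_supported (z : EuclideanSpace ℝ (Fin p)) (D : Finset (Fin p)) :
    restrict z D ∈ supported D :=
  fun i hi => by simp [restrict_apply, hi]

theorem restrict_sub (x y : EuclideanSpace ℝ (Fin p)) (D : Finset (Fin p)) :
    restrict (x - y) D = restrict x D - restrict y D := by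
  ext i; by_cases hi : i ∈ D <;> simp [restrict_apply, hi]

theorem restrict_smul (c : ℝ) (x : EuclideanSpace ℝ (Fin p)) (D : Finset (Fin p)) :
    restrict (c • x) D = c • restrict x D := by
  ext i; by_cases hi : i ∈ D <;> simp [restrict_apply, hi]

theorem restrict_restrict_of_subset (z : EuclideanSpace ℝ (Fin p)) {D D' : Finset (Fin p)}
    (h : D ⊆ D') : restrict (restrict z D') D = restrict z D := by
  ext i
  by_cases hi : i ∈ D
  · simp [restrict_apply, hi, h hi]
  · simp [restrict_apply, hi]

theorem norm_restrict_le (z : EuclideanSpace ℝ (Fin p)) (D : Finset (Fin p)) :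
    ‖restrict z D‖ ≤ ‖z‖ := by
  rw [EuclideanSpace.norm_eq, EuclideanSpace.norm_eq]
  gcongr with i
  by_cases hi : i ∈ D <;> simp [restrict_apply, hi]

theorem norm_restrict_mono (z : EuclideanSpace ℝ (Fin p)) {D D' : Finset (Fin p)} (h : D ⊆ D') :
    ‖restrict z D‖ ≤ ‖restrict z D'‖ :=
  restrict_restrict_of_subset z h ▸ norm_restrict_le _ D

theorem inner_restrict_self (z : EuclideanSpace ℝ (Fin p)) (D : Finset (Fin p)) :
    ⟪restrict z D, z⟫ = ‖restrict z D‖ ^ 2 := by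
  rw [← real_inner_self_eq_norm_sq, PiLp.inner_apply, PiLp.inner_apply]
  refine Finset.sum_congr rfl fun i _ => ?_
  by_cases hi : i ∈ D <;> simp [restrict_apply, hi]

end Support

section HardThresholding

variable {p : ℕ}

theorem norm_restrict_gradient_step_sub_le {f : EuclideanSpace ℝ (Fin p) → ℝ}
    (hf : ContDiff ℝ 2 f) {α L : ℝ} (hL : 0 < L) (hαL : α ≤ L) {D : Finset (Fin p)}
    {a b : EuclideanSpace ℝ (Fin p)} (hab : a - b ∈ supported D)
    (hH : ∀ s ∈ Set.Icc (0 : ℝ) 1, ∀ v ∈ supported D,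
      α * ‖v‖ ^ 2 ≤ iteratedFDeriv ℝ 2 f (b + s • (a - b)) ![v, v] ∧
      iteratedFDeriv ℝ 2 f (b + s • (a - b)) ![v, v] ≤ L * ‖v‖ ^ 2) :
    ‖restrict (a - b - (1 / L) • (gradient f a - gradient f b)) D‖ ≤ (1 - α / L) * ‖a - b‖ := by
  set y := a - b - (1 / L) • (gradient f a - gradient f b)
  have h := inner_sub_gradient_sub_le hf hL _ hab (restrict_mem_supported y D) hH
  rw [inner_restrict_self] at h
  set u := restrict y D
  rcases (norm_nonneg u).eq_or_lt with hu | hu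
  · rw [← hu]
    have : 0 ≤ 1 - α / L := sub_nonneg.2 ((div_le_one hL).2 hαL)
    positivity
  · nlinarith

theorem norm_restrict_sub_le_of_approx {θ ε : ℝ} {b wstar : EuclideanSpace ℝ (Fin p)}
    {T R : Finset (Fin p)} (hR : wstar ∈ supported R)
    (happrox : ‖restrict b (R \ T)‖ ^ 2 ≤ θ * ‖restrict b (T \ R)‖ ^ 2 + ε) :
    ‖restrict b T - wstar‖ ≤ (1 + √θ) * ‖restrict (b - wstar) (T ∪ R)‖ + √ε := by
  have hdecomp : restrict b T - wstar = restrict (b - wstar) (T ∪ R) - restrict b (R \ T) := by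
    ext i
    have := hR i
    by_cases hT : i ∈ T <;> by_cases hR' : i ∈ R <;> simp_all [restrict_apply]
  have hoff : restrict b (T \ R) = restrict (b - wstar) (T \ R) := by
    ext i
    have := hR i
    by_cases hT : i ∈ T <;> by_cases hR' : i ∈ R <;> simp_all [restrict_apply]
  have hmissed : ‖restrict b (R \ T)‖ ≤ √θ * ‖restrict (b - wstar) (T ∪ R)‖ + √ε :=
    calc ‖restrict b (R \ T)‖ ≤ √θ * ‖restrict b (T \ R)‖ + √ε :=
          le_sqrt_mul_add_sqrt (norm_nonneg _) happrox
      _ ≤ √θ * ‖restrict (b - wstar) (T ∪ R)‖ + √ε := by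
          rw [hoff]
          gcongr
          exact norm_restrict_mono _ (Finset.sdiff_subset.trans Finset.subset_union_left)
  calc ‖restrict b T - wstar‖
      ≤ ‖restrict (b - wstar) (T ∪ R)‖ + ‖restrict b (R \ T)‖ := hdecomp ▸ norm_sub_le _ _
    _ ≤ (1 + √θ) * ‖restrict (b - wstar) (T ∪ R)‖ + √ε := by linarith

theorem norm_hardThresholdingStep_sub_le {f : EuclideanSpace ℝ (Fin p) → ℝ}
    (hf : ContDiff ℝ 2 f) {α L θ ε γ : ℝ} (hL : 0 < L) (hαL : α ≤ L) {S S' : Finset (Fin p)}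
    {w wstar : EuclideanSpace ℝ (Fin p)} (hw : suppF w ⊆ S)
    (hH : ∀ z : EuclideanSpace ℝ (Fin p), suppF z ⊆ S ∪ suppF wstar →
      ∀ v : EuclideanSpace ℝ (Fin p), suppF v ⊆ S ∪ S' ∪ suppF wstar →
      α * ‖v‖ ^ 2 ≤ iteratedFDeriv ℝ 2 f z ![v, v] ∧ iteratedFDeriv ℝ 2 f z ![v, v] ≤ L * ‖v‖ ^ 2)
    (happrox : ‖restrict (w - (1 / L) • gradient f w) (suppF wstar \ S')‖ ^ 2 ≤
      θ * ‖restrict (w - (1 / L) • gradient f w) (S' \ suppF wstar)‖ ^ 2 + ε)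
    (hγ : ‖restrict (gradient f wstar) (S' ∪ suppF wstar)‖ ≤ γ) :
    ‖restrict (w - (1 / L) • gradient f w) S' - wstar‖ ≤
      (1 + √θ) * ((1 - α / L) * ‖w - wstar‖ + γ / L) + √ε := by
  set R := suppF wstar
  have hstar : wstar ∈ supported R := mem_supported_iff.2 subset_rfl
  have hw' : w ∈ supported S := mem_supported_iff.2 hw
  have hcontract : ‖restrict (w - wstar - (1 / L) • (gradient f w - gradient f wstar))
      (S ∪ S' ∪ R)‖ ≤ (1 - α / L) * ‖w - wstar‖ := by
    refine norm_restrict_gradient_step_sub_le hf hL hαL ?_ fun s _ v hv => ?_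
    · exact Submodule.sub_mem _ (supported_mono (by grind) hw') (supported_mono (by grind) hstar)
    · refine hH _ (mem_supported_iff.1 ?_) v (mem_supported_iff.1 hv)
      exact Submodule.add_mem _ (supported_mono (by grind) hstar) (Submodule.smul_mem _ s
        (Submodule.sub_mem _ (supported_mono (by grind) hw') (supported_mono (by grind) hstar)))
  have hgrad : ‖restrict (w - (1 / L) • gradient f w - wstar) (S' ∪ R)‖ ≤
      (1 - α / L) * ‖w - wstar‖ + γ / L := by
    have hsplit : w - (1 / L) • gradient f w - wstar =
        (w - wstar - (1 / L) • (gradient f w - gradient f wstar)) - (1 / L) • gradient f wstar := by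
      module
    rw [hsplit, restrict_sub, restrict_smul]
    refine (norm_sub_le _ _).trans (add_le_add ?_ ?_)
    · exact (norm_restrict_mono _ (by grind)).trans hcontract
    · rw [norm_smul, Real.norm_of_nonneg (by positivity), one_div_mul_eq_div]
      gcongr
  calc _ ≤ (1 + √θ) * ‖restrict (w - (1 / L) • gradient f w - wstar) (S' ∪ R)‖ + √ε :=
        norm_restrict_sub_le_of_approx hstar happrox
    _ ≤ _ := by gcongr

end HardThresholding

theorem stmt_12_general (p : ℕ) (𝒮 : Set (Finset (Fin p)))
    (wstar : EuclideanSpace ℝ (Fin p))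
    (α L : ℝ) (hα : 0 < α) (hαL : α ≤ L)
    (f : EuclideanSpace ℝ (Fin p) → ℝ) (hf : ContDiff ℝ 2 f)
    (hH : ∀ S ∈ 𝒮, ∀ S' ∈ 𝒮, ∀ w : EuclideanSpace ℝ (Fin p),
        suppF w ⊆ S ∪ suppF wstar →
        ∀ v : EuclideanSpace ℝ (Fin p), suppF v ⊆ S ∪ S' ∪ suppF wstar →
        α * ‖v‖ ^ 2 ≤ iteratedFDeriv ℝ 2 f w ![v, v] ∧
        iteratedFDeriv ℝ 2 f w ![v, v] ≤ L * ‖v‖ ^ 2)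
    (θ ε : ℝ)
    (ρ : ℝ) (hρdef : ρ = (1 + Real.sqrt θ) * (1 - α / L)) (hρ : ρ < 1)
    (w : ℕ → EuclideanSpace ℝ (Fin p)) (S : ℕ → Finset (Fin p))
    (hS0 : S 0 ∈ 𝒮) (hw0 : suppF (w 0) ⊆ S 0)
    (hSmem : ∀ t : ℕ, S (t + 1) ∈ 𝒮)
    (hstep : ∀ t : ℕ, w (t + 1) = restrict (w t - (1 / L) • gradient f (w t)) (S (t + 1)))
    (happrox : ∀ t : ℕ,
        ‖restrict (w t - (1 / L) • gradient f (w t)) (suppF wstar \ S (t + 1))‖ ^ 2 ≤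
          θ * ‖restrict (w t - (1 / L) • gradient f (w t)) (S (t + 1) \ suppF wstar)‖ ^ 2 + ε)
    (γ : ℝ)
    (hγ : γ = sSup {r : ℝ | ∃ Sm ∈ 𝒮,
        r = ‖restrict (gradient f wstar) (Sm ∪ suppF wstar)‖}) :
    ∀ T : ℕ, ‖w T - wstar‖ ≤
      ρ ^ T * ‖w 0 - wstar‖ +
        (1 / (1 - ρ)) * ((1 + Real.sqrt θ) / L * γ + Real.sqrt ε) := by
  have hL : 0 < L := hα.trans_le hαL
  have hρ₀ : 0 ≤ ρ := hρdef ▸ mul_nonneg (by positivity) (sub_nonneg.2 ((div_le_one hL).2 hαL))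
  have hS : ∀ t, S t ∈ 𝒮 := fun t => t.casesOn hS0 hSmem
  have hw : ∀ t, suppF (w t) ⊆ S t := fun t => t.casesOn hw0 fun t =>
    hstep t ▸ mem_supported_iff.1 (restrict_mem_supported _ _)
  have hγS : ∀ Sm ∈ 𝒮, ‖restrict (gradient f wstar) (Sm ∪ suppF wstar)‖ ≤ γ := fun Sm hSm =>
    hγ ▸ le_csSup ⟨‖gradient f wstar‖, by rintro _ ⟨_, _, rfl⟩; exact norm_restrict_le _ _⟩
      ⟨Sm, hSm, rfl⟩
  have hγ₀ : 0 ≤ γ := (norm_nonneg _).trans (hγS _ hS0)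
  refine le_pow_mul_add_of_le_mul_add hρ₀ hρ (by positivity) fun t => ?_
  rw [hstep t]
  refine (norm_hardThresholdingStep_sub_le hf hL hαL (hw t) (hH _ (hS t) _ (hSmem t))
    (happrox t) (hγS _ (hSmem t))).trans_eq ?_
  rw [hρdef]
  ring

/-- Theorem `approx_gen` of the paper, abstract form: IHT over an abstract
family of supports `𝒮_k` with a `(θ, ε)`-approximate projection property and restricted
Hessian bounds, with `ρ = (1 + √θ)(1 − α/L) < 1`, contracts geometrically:
`‖w_T − w*‖ ≤ ρ^T‖w_0 − w*‖ + (1/(1−ρ))[((1+√θ)/L)γ + √ε]`,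
where `γ = sup_{S ∈ 𝒮_k} ‖(∇f(w*))_{S∪S*}‖`. -/
theorem stmt_12 (p : ℕ) (𝒮 : Set (Finset (Fin p)))
    (wstar : EuclideanSpace ℝ (Fin p))
    (α L : ℝ) (hα : 0 < α) (hαL : α ≤ L)
    (f : EuclideanSpace ℝ (Fin p) → ℝ) (hf : ContDiff ℝ 2 f)
    (hH : ∀ S ∈ 𝒮, ∀ S' ∈ 𝒮, ∀ w : EuclideanSpace ℝ (Fin p),
        suppF w ⊆ S ∪ suppF wstar →
        ∀ v : EuclideanSpace ℝ (Fin p), suppF v ⊆ S ∪ S' ∪ suppF wstar →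
        α * ‖v‖ ^ 2 ≤ iteratedFDeriv ℝ 2 f w ![v, v] ∧
        iteratedFDeriv ℝ 2 f w ![v, v] ≤ L * ‖v‖ ^ 2)
    (θ ε : ℝ) (hθ : 0 ≤ θ) (hε : 0 ≤ ε)
    (ρ : ℝ) (hρdef : ρ = (1 + Real.sqrt θ) * (1 - α / L)) (hρ : ρ < 1)
    (w : ℕ → EuclideanSpace ℝ (Fin p)) (S : ℕ → Finset (Fin p))
    (hS0 : S 0 ∈ 𝒮) (hw0 : suppF (w 0) ⊆ S 0)
    (hSmem : ∀ t : ℕ, S (t + 1) ∈ 𝒮)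
    (hstep : ∀ t : ℕ, w (t + 1) = restrict (w t - (1 / L) • gradient f (w t)) (S (t + 1)))
    (happrox : ∀ t : ℕ,
        ‖restrict (w t - (1 / L) • gradient f (w t)) (suppF wstar \ S (t + 1))‖ ^ 2 ≤
          θ * ‖restrict (w t - (1 / L) • gradient f (w t)) (S (t + 1) \ suppF wstar)‖ ^ 2 + ε)
    (γ : ℝ)
    (hγ : γ = sSup {r : ℝ | ∃ Sm ∈ 𝒮,
        r = ‖restrict (gradient f wstar) (Sm ∪ suppF wstar)‖}) :
    ∀ T : ℕ, ‖w T - wstar‖ ≤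
      ρ ^ T * ‖w 0 - wstar‖ +
        (1 / (1 - ρ)) * ((1 + Real.sqrt θ) / L * γ + Real.sqrt ε) :=
  stmt_12_general p 𝒮 wstar α L hα hαL f hf hH θ ε ρ hρdef hρ w S hS0 hw0 hSmem hstep happrox γ hγ
end
end

section
/- Let z ∈ ℝ^p, let S ⊆ {1, …, p} with |S| = k be such that |z_a| ≥ |z_b| for every a ∈ S and b ∉ S (S consists of k largest-magnitude coordinates of z), and let S* ⊆ {1, …, p} with |S*| ≤ k* ≤ k. Then ‖z_{S*\S}‖² ≤ (k*/k) · ‖z_{S\S*}‖². -/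
/-!
Every coordinate of `z` outside `S` is dominated by every coordinate inside `S`, so the mean
square of `z` over `S* \ S` is at most its mean square over `S \ S*`. Writing `c = |S ∩ S*|`,
the ratio of the sizes is `(|S*| - c) / (k - c) ≤ k* / k`, since `k* ≤ k`.
-/

open Finset

noncomputable section

theorem EuclideanSpace.norm_restrict_sq {p : ℕ} (z : EuclideanSpace ℝ (Fin p))
    (T : Finset (Fin p)) : ‖restrict z T‖ ^ 2 = ∑ i ∈ T, z i ^ 2 := by
  rw [EuclideanSpace.norm_eq, Real.sq_sqrt (by positivity)]
  simp [_root_.restrict, apply_ite, Finset.sum_ite_mem]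

namespace Finset

variable {ι : Type*}

theorem card_mul_sum_le_card_mul_sum_of_forall_le {f : ι → ℝ} {s t : Finset ι}
    (h : ∀ a ∈ s, ∀ b ∈ t, f a ≤ f b) : #t * ∑ i ∈ s, f i ≤ #s * ∑ i ∈ t, f i := by
  calc (#t : ℝ) * ∑ i ∈ s, f i = ∑ a ∈ s, ∑ _b ∈ t, f a := by simp [sum_mul, mul_comm]
    _ ≤ ∑ _a ∈ s, ∑ b ∈ t, f b := sum_le_sum fun a ha => sum_le_sum fun b hb => h a ha b hb
    _ = #s * ∑ i ∈ t, f i := by simp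

theorem card_sdiff_mul_card_le_mul_card_sdiff [DecidableEq ι] {s t : Finset ι} {m : ℕ}
    (ht : #t ≤ m) (hm : m ≤ #s) : #(t \ s) * #s ≤ m * #(s \ t) := by
  have hts := card_sdiff_add_card_inter t s
  have hst := card_sdiff_add_card_inter s t
  rw [inter_comm] at hts
  nlinarith

theorem sum_sdiff_le_div_mul_sum_sdiff_of_forall_le [DecidableEq ι] {f : ι → ℝ}
    (hf : ∀ i, 0 ≤ f i) {s t : Finset ι} {m : ℕ} (ht : #t ≤ m) (hm : m ≤ #s)
    (hs : ∀ a ∈ s, ∀ b ∉ s, f b ≤ f a) :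
    ∑ i ∈ t \ s, f i ≤ (m / #s) * ∑ i ∈ s \ t, f i := by
  have hcardN := card_sdiff_mul_card_le_mul_card_sdiff ht hm
  have hcard : (#(t \ s) * #s : ℝ) ≤ m * #(s \ t) := by exact_mod_cast hcardN
  have hsum := card_mul_sum_le_card_mul_sum_of_forall_le (f := f) (s := t \ s) (t := s \ t)
    fun a ha b hb => hs b (mem_sdiff.1 hb).1 a (mem_sdiff.1 ha).2
  have hpos : 0 ≤ ∑ i ∈ s \ t, f i := sum_nonneg fun i _ => hf i
  rcases (#s).eq_zero_or_pos with hs0 | hs0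
  · have : t = ∅ := card_eq_zero.1 (by omega)
    simp [this, hs0]
  rw [div_mul_eq_mul_div, le_div_iff₀ (by exact_mod_cast hs0)]
  rcases (#(s \ t)).eq_zero_or_pos with hst | hst
  · rw [hst, mul_zero, Nat.le_zero, Nat.mul_eq_zero] at hcardN
    simp only [card_eq_zero.1 (hcardN.resolve_right hs0.ne'), sum_empty, zero_mul]
    positivity
  · have hst' : (0 : ℝ) < #(s \ t) := by exact_mod_cast hst
    nlinarith [mul_le_mul_of_nonneg_right hcard hpos]

end Finset

/-- Lemma 1 of Jain et al., hard thresholding: if `S` consists of `k`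
largest-magnitude coordinates of `z` and `|S*| ≤ k* ≤ k`, then
`‖z_{S*\S}‖² ≤ (k*/k)‖z_{S\S*}‖²`. -/
theorem stmt_13 (p : ℕ) (z : EuclideanSpace ℝ (Fin p))
    (k kstar : ℕ) (hks : kstar ≤ k)
    (S : Finset (Fin p)) (hScard : S.card = k)
    (hStop : ∀ a ∈ S, ∀ b ∉ S, |z b| ≤ |z a|)
    (Sstar : Finset (Fin p)) (hSstar : Sstar.card ≤ kstar) :
    ‖restrict z (Sstar \ S)‖ ^ 2 ≤ ((kstar : ℝ) / (k : ℝ)) * ‖restrict z (S \ Sstar)‖ ^ 2 := by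
  subst hScard
  simp only [EuclideanSpace.norm_restrict_sq]
  exact sum_sdiff_le_div_mul_sum_sdiff_of_forall_le (fun i => sq_nonneg (z i)) hSstar hks
    fun a ha b hb => sq_le_sq.2 (hStop a ha b hb)
end
end
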